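/- In model R, for every fixed ℓ ≥ 1 there exists a constant κ > 0 such that for all n ≥ ℓ, all integers j with cm ≤ j ≤ T_{ℓ−1}, and all integers k with 0 ≤ k < m(n+1), one has Σ_{i=0}^{m} P(W_{n+1} = j+ck | W_n = j+c(k−i)) ≤ 1 − 1/n + κ/n², where P(W_{n+1} = w + c·i | W_n = w) := C(m,i)·w^{i}·(T_n−w)^{m−i}/T_n^{m} for 0 ≤ i ≤ m. -/

import Mathlib

/-!
Write `w = j + ck`, so that the `i`-th state is `w - ci`. Expanding `(T - (w - ci))^(m-i)`
binomially and exchanging the two summations, the coefficient of `T^s` becomes an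
`(m-s)`-th forward difference of the polynomial `x ↦ (w - cx)^(m-s)`, namely `(-c)^(m-s) (m-s)!`.
Hence the transition sum equals `∑ s, C(m,s) (m-s)! (-c/T_n)^(m-s)`, whatever `j` and `k` are:
it is `1 - mc/T_n + O((c/T_n)^2)`, and `mc/T_n = 1/n - T_0/(n T_n) ≥ 1/n - T_0/n^2`.
-/

/-- Total number of balls after `n` draws: `T_n = W_0 + B_0 + n·m·c`. -/
def urnT (W0 B0 m c n : ℕ) : ℕ := W0 + B0 + n * m * c

open Finset Nat

theorem Nat.choose_mul_choose_sub_comm {m i s : ℕ} (h : i + s ≤ m) :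
    m.choose i * (m - i).choose s = m.choose s * (m - s).choose i := by
  rw [← choose_symm (by omega : i ≤ m), choose_mul (by omega : s ≤ m - i),
    choose_symm_of_eq_add (by omega : m - s = m - i - s + i)]

theorem Nat.choose_mul_factorial_sub_le {m s : ℕ} (h : s ≤ m) : m.choose s * (m - s)! ≤ m ! :=
  calc m.choose s * (m - s)! ≤ m.choose s * s ! * (m - s)! := by
        gcongr; exact Nat.le_mul_of_pos_right _ s.factorial_pos
    _ = m ! := choose_mul_factorial_mul_factorial h

section CommRing

variable {R : Type*} [CommRing R]

theorem sum_neg_one_pow_mul_choose_mul_add_mul_pow (a b : R) (d : ℕ) :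
    ∑ k ∈ range (d + 1), (-1 : R) ^ (d - k) * d.choose k * (a + b * k) ^ d = b ^ d * d ! := by
  have hsplit : (fun x : R ↦ (a + b * x) ^ d) =
      (fun x ↦ ∑ k ∈ range d, (b ^ k * a ^ (d - k) * d.choose k) * x ^ k) +
        b ^ d • fun x ↦ x ^ d := by
    ext x
    rw [add_comm a, add_pow, sum_range_succ]
    simp only [mul_pow, Nat.sub_self, pow_zero, choose_self, Nat.cast_one, mul_one, Pi.add_apply,
      Pi.smul_apply, smul_eq_mul]
    congr 1
    exact sum_congr rfl fun k _ ↦ by ring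
  have hΔ := fwdDiff_iter_eq_sum_shift 1 (fun x : R ↦ (a + b * x) ^ d) d 0
  rw [hsplit, fwdDiff_iter_add, fwdDiff_iter_sum_mul_pow_eq_zero, fwdDiff_iter_const_smul,
    fwdDiff_iter_eq_factorial] at hΔ
  simpa [zsmul_eq_mul] using hΔ.symm

theorem sum_choose_mul_pow_mul_sub_pow (m : ℕ) (c w T : R) :
    ∑ i ∈ range (m + 1), (m.choose i : R) * (w - c * i) ^ i * (T - (w - c * i)) ^ (m - i) =
      ∑ s ∈ range (m + 1), (m.choose s : R) * (m - s)! * (-c) ^ (m - s) * T ^ s := by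
  have hexpand : ∀ i ∈ range (m + 1),
      (m.choose i : R) * (w - c * i) ^ i * (T - (w - c * i)) ^ (m - i) =
        ∑ s ∈ range (m - i + 1), (m.choose s : R) * T ^ s *
          ((-1) ^ (m - s - i) * (m - s).choose i * (w + (-c) * i) ^ (m - s)) := by
    intro i hi
    rw [sub_eq_add_neg T, add_pow, mul_sum]
    refine sum_congr rfl fun s hs ↦ ?_
    rw [mem_range] at hi hs
    obtain ⟨t, ht⟩ : ∃ t, m - s = i + t := ⟨m - s - i, by omega⟩
    have hchoose := congrArg (Nat.cast : ℕ → R) (choose_mul_choose_sub_comm (by omega : i + s ≤ m))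
    rw [ht] at hchoose
    push_cast at hchoose
    rw [show m - i - s = t by omega, show m - s - i = t by omega, ht, neg_pow]
    linear_combination (T ^ s * (-1) ^ t * (w - c * i) ^ (i + t)) * hchoose
  rw [sum_congr rfl hexpand, sum_comm' (t' := range (m + 1)) (s' := fun s ↦ range (m - s + 1))]
  · refine sum_congr rfl fun s _ ↦ ?_
    rw [← mul_sum, sum_neg_one_pow_mul_choose_mul_add_mul_pow]
    ring
  · intro i s
    simp only [mem_range]
    omega

end CommRing

theorem sum_choose_mul_pow_mul_sub_pow_div_pow {K : Type*} [Field K] (m : ℕ) (c w T : K)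
    (hT : T ≠ 0) :
    ∑ i ∈ range (m + 1), (m.choose i : K) * (w - c * i) ^ i * (T - (w - c * i)) ^ (m - i) / T ^ m =
      ∑ s ∈ range (m + 1), (m.choose s : K) * (m - s)! * (-(c / T)) ^ (m - s) := by
  rw [← sum_div, sum_choose_mul_pow_mul_sub_pow, sum_div]
  refine sum_congr rfl fun s hs ↦ ?_
  rw [show T ^ m = T ^ s * T ^ (m - s) by rw [← pow_add]; congr 1; grind, ← neg_div, div_pow]
  field_simp

theorem sum_choose_mul_factorial_mul_neg_pow_le (m : ℕ) {x : ℝ} (hx₀ : 0 ≤ x) (hx₁ : x ≤ 1) :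
    ∑ s ∈ range (m + 1), (m.choose s : ℝ) * (m - s)! * (-x) ^ (m - s) ≤
      1 - m * x + m * m ! * x ^ 2 := by
  cases m with
  | zero => simp
  | succ p =>
    have hterm : ∀ s ∈ range p, ((p + 1).choose s : ℝ) * (p + 1 - s)! * (-x) ^ (p + 1 - s) ≤
        (p + 1)! * x ^ 2 := by
      intro s hs
      rw [mem_range] at hs
      have hpow : (-x) ^ (p + 1 - s) ≤ x ^ 2 :=
        calc (-x) ^ (p + 1 - s) ≤ x ^ (p + 1 - s) := by
              simpa [abs_of_nonneg hx₀] using le_abs_self ((-x) ^ (p + 1 - s))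
          _ ≤ x ^ 2 := pow_le_pow_of_le_one hx₀ hx₁ (by omega)
      have hcoef : ((p + 1).choose s : ℝ) * (p + 1 - s)! ≤ (p + 1)! := by
        exact_mod_cast choose_mul_factorial_sub_le (by omega : s ≤ p + 1)
      calc _ ≤ ((p + 1).choose s : ℝ) * (p + 1 - s)! * x ^ 2 := by gcongr
        _ ≤ (p + 1)! * x ^ 2 := by gcongr
    have htail := sum_le_sum hterm
    rw [sum_const, card_range, nsmul_eq_mul] at htail
    rw [sum_range_succ, sum_range_succ]
    simp only [Nat.sub_self, choose_self, show p + 1 - p = 1 by omega, choose_succ_self_right,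
      factorial_zero, factorial_one, pow_zero, pow_one]
    push_cast
    nlinarith [show 0 ≤ ((p + 1)! : ℝ) * x ^ 2 by positivity]

theorem modelR_transition_sum_bound_general (W0 B0 m c : ℕ) (hm : 1 ≤ m) (hc : 1 ≤ c)
    (ℓ : ℕ) (hℓ : 1 ≤ ℓ) :
    ∃ κ : ℝ, 0 < κ ∧ ∀ n : ℕ, ℓ ≤ n → ∀ j k : ℕ,
      c * m ≤ j → j ≤ urnT W0 B0 m c (ℓ - 1) → k < m * (n + 1) →
      ∑ i ∈ Finset.range (m + 1),
          (Nat.choose m i : ℝ) * ((j : ℝ) + c * ((k : ℝ) - i)) ^ i *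
            ((urnT W0 B0 m c n : ℝ) - ((j : ℝ) + c * ((k : ℝ) - i))) ^ (m - i) /
            (urnT W0 B0 m c n : ℝ) ^ m ≤
        1 - 1 / (n : ℝ) + κ / (n : ℝ) ^ 2 := by
  refine ⟨W0 + B0 + m * m ! * c ^ 2, by positivity, fun n hn j k _ _ _ ↦ ?_⟩
  set T : ℝ := (urnT W0 B0 m c n : ℝ) with hT
  have hTn : T = W0 + B0 + n * (m * c) := by simp only [hT, urnT]; push_cast; ring
  have hn : (1 : ℝ) ≤ n := by exact_mod_cast hℓ.trans hn
  have hmc : (1 : ℝ) ≤ m * c := by exact_mod_cast Nat.one_le_iff_ne_zero.2 (by positivity)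
  have hnT : (n : ℝ) ≤ T := by rw [hTn]; nlinarith
  have hcT : (c : ℝ) ≤ T := by
    have : (c : ℝ) ≤ m * c := le_mul_of_one_le_left (by positivity) (by exact_mod_cast hm)
    rw [hTn]; nlinarith
  have hdrift : 1 / (n : ℝ) - m * (c / T) ≤ (W0 + B0) / n ^ 2 :=
    calc 1 / (n : ℝ) - m * (c / T) = (W0 + B0) / (n * T) := by
          rw [hTn] at hnT ⊢; field_simp; ring
      _ ≤ (W0 + B0) / n ^ 2 := by rw [sq]; gcongr
  have hquad : m * m ! * (c / T : ℝ) ^ 2 ≤ m * m ! * c ^ 2 / n ^ 2 := by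
    rw [mul_div_assoc, ← div_pow]; gcongr
  calc _ = ∑ s ∈ range (m + 1), (m.choose s : ℝ) * (m - s)! * (-(c / T)) ^ (m - s) := by
        rw [← sum_choose_mul_pow_mul_sub_pow_div_pow m (c : ℝ) (j + c * k) T (by linarith)]
        refine sum_congr rfl fun i _ ↦ ?_
        ring
    _ ≤ 1 - m * (c / T) + m * m ! * (c / T) ^ 2 :=
        sum_choose_mul_factorial_mul_neg_pow_le m (by positivity) ((div_le_one (by linarith)).2 hcT)
    _ ≤ 1 - 1 / (n : ℝ) + (W0 + B0 + m * m ! * c ^ 2) / (n : ℝ) ^ 2 := by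
        rw [add_div]; linarith

/-- In model `R`, for every fixed `ℓ ≥ 1` there is a constant `κ > 0` such that for all
`n ≥ ℓ`, all `j` with `cm ≤ j ≤ T_{ℓ−1}` and all `k < m(n+1)`,
`Σ_{i=0}^{m} P(W_{n+1}=j+ck | W_n=j+c(k−i)) ≤ 1 − 1/n + κ/n²`, where
`P(W_{n+1}=w+ci | W_n=w) = C(m,i)·w^i·(T_n−w)^{m−i}/T_n^m`. -/
theorem modelR_transition_sum_bound (W0 B0 m c : ℕ) (hm : 1 ≤ m) (hc : 1 ≤ c)
    (hW0 : 1 ≤ W0) (hB0 : 1 ≤ B0) (hT0 : m ≤ W0 + B0)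
    (ℓ : ℕ) (hℓ : 1 ≤ ℓ) :
    ∃ κ : ℝ, 0 < κ ∧ ∀ n : ℕ, ℓ ≤ n → ∀ j k : ℕ,
      c * m ≤ j → j ≤ urnT W0 B0 m c (ℓ - 1) → k < m * (n + 1) →
      ∑ i ∈ Finset.range (m + 1),
          (Nat.choose m i : ℝ) * ((j : ℝ) + c * ((k : ℝ) - i)) ^ i *
            ((urnT W0 B0 m c n : ℝ) - ((j : ℝ) + c * ((k : ℝ) - i))) ^ (m - i) /
            (urnT W0 B0 m c n : ℝ) ^ m ≤
        1 - 1 / (n : ℝ) + κ / (n : ℝ) ^ 2 :=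
  modelR_transition_sum_bound_general W0 B0 m c hm hc ℓ hℓ
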